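/- (Theorem 1.) Let (G_t,H_t), t ∈ ℕ, be a sequence of CSS pairs of strictly increasing block lengths n_t, such that every row of every G_t and every H_t has Hamming weight at most m (m ≥ 2), and such that the CSS distances satisfy min(d_{G_t}, d_{H_t}) ≥ D·ln(n_t) for some constant D > 0. Then for every K ≥ 0 and 0 ≤ p ≤ 1 satisfying (m−1)·[e^{−2K}(1−p) + e^{2K}p] < e^{−1/D}, the disorder-averaged homological differences converge to zero: lim_{t→∞} [ΔF_e(G_t,H_t;K)]_p = 0. -/

import Mathlib

open Matrix Filter

/-- Partition function `Z_e(G;K)` of the random-bond Ising model in Wegner's form. -/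
noncomputable def Zf {ρ : Type*} [Fintype ρ] [DecidableEq ρ] {n : ℕ}
    (G : Matrix ρ (Fin n) (ZMod 2)) (e : Fin n → ZMod 2) (K : ℝ) : ℝ :=
  ∑ α : ρ → ZMod 2,
    Real.exp (K * ∑ b : Fin n, (-1 : ℝ) ^ ((e b).val + ((Matrix.vecMul α G) b).val))

/-- `Hs` is an adapted dual of `H`: it stacks `G` on top of `k` extra rows, and its
row space equals `C_H^⊥ = {c | H cᵀ = 0}`. -/
def IsAdaptedDual {rG rH k n : ℕ} (G : Matrix (Fin rG) (Fin n) (ZMod 2))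
    (H : Matrix (Fin rH) (Fin n) (ZMod 2))
    (Hs : Matrix (Fin rG ⊕ Fin k) (Fin n) (ZMod 2)) : Prop :=
  (∀ i, Hs (Sum.inl i) = G i) ∧
  LinearMap.range Hs.vecMulLinear = LinearMap.ker H.mulVecLin

/-- Homological difference `ΔF_e(G,H;K) = ln Z_e(H*;K) − ln Z_e(G;K)`. -/
noncomputable def deltaF {ρ ρ' : Type*} [Fintype ρ] [DecidableEq ρ] [Fintype ρ'] [DecidableEq ρ'] {n : ℕ}
    (G : Matrix ρ (Fin n) (ZMod 2)) (Hs : Matrix ρ' (Fin n) (ZMod 2))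
    (e : Fin n → ZMod 2) (K : ℝ) : ℝ :=
  Real.log (Zf Hs e K) - Real.log (Zf G e K)

/-- Disorder average `[X_e]_p = Σ_e p^{|e|}(1−p)^{n−|e|} X_e`. -/
noncomputable def davg {n : ℕ} (p : ℝ) (X : (Fin n → ZMod 2) → ℝ) : ℝ :=
  ∑ e : Fin n → ZMod 2, p ^ hammingNorm e * (1 - p) ^ (n - hammingNorm e) * X e

/-- Average success probability of maximum-likelihood decoding. -/
noncomputable def Psucc {ρ ρ' : Type*} [Fintype ρ] [DecidableEq ρ] [Fintype ρ'] [DecidableEq ρ'] {n : ℕ}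
    (G : Matrix ρ (Fin n) (ZMod 2)) (Hs : Matrix ρ' (Fin n) (ZMod 2))
    (K p : ℝ) : ℝ :=
  davg p (fun e => Zf G e K / Zf Hs e K)

/-- CSS distance `d_G`: minimum Hamming weight of a vector `c` with `H cᵀ = 0`
that is not in the row space of `G`. -/
noncomputable def dCSS {rG rH n : ℕ} (G : Matrix (Fin rG) (Fin n) (ZMod 2))
    (H : Matrix (Fin rH) (Fin n) (ZMod 2)) : ℕ :=
  sInf {w | ∃ c : Fin n → ZMod 2,
    H.mulVec c = 0 ∧ (¬ ∃ α, Matrix.vecMul α G = c) ∧ hammingNorm c = w}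

/-!
Write `Z_e(H*)` and `Z_e(G)` as sums of Boltzmann weights over `C_H^⊥` and over the row space
of `G`, each times the size of a kernel; the dimension count `k = n - rank G - rank H` makes the
kernel for `H*` no larger than the one for `G`. Every codeword of `C_H^⊥` is a disjoint sum of
minimal codewords, and those lying in the row space of `G` add up to an element of it; hence
`Z_e(H*) ≤ Z_e(G) ∏_γ (1 + B_e(γ))` over the logical minimal codewords `γ`, where
`B_e(γ) = w_e(γ) / w_e(0)`, and `0 ≤ ΔF_e ≤ ∑_γ B_e(γ)`. The disorder average of `B_e(γ)` is
`x^|γ|` with `x = e^{-2K}(1-p) + e^{2K}p`. A minimal codeword through a given bit is grown one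
bit at a time, each time inside a row of `H` that meets the current set oddly, with at most
`m - 1` choices, so there are at most `n (m-1)^(ℓ-1)` of weight `ℓ`; logical ones have weight at
least `d_G`. With `y = (m-1)x < 1` the average is at most `n y^{d_G} / (1 - y)`, and
`n y^{D ln n} = n^{1 + D ln y} → 0` because `y < e^{-1/D}`.
-/

open Finset
open scoped symmDiff

namespace CSS

variable {n : ℕ}

lemma zmod_two_eq_zero_or_one (z : ZMod 2) : z = 0 ∨ z = 1 := by
  revert z; decide

def supp (c : Fin n → ZMod 2) : Finset (Fin n) := {b | c b ≠ 0}

@[simp] lemma mem_supp {c : Fin n → ZMod 2} {b : Fin n} : b ∈ supp c ↔ c b ≠ 0 := by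
  simp [supp]

lemma hammingNorm_eq_card_supp (c : Fin n → ZMod 2) : hammingNorm c = #(supp c) := rfl

lemma supp_injective : Function.Injective (supp (n := n)) := by
  intro c c' h
  funext b
  have hb : c b ≠ 0 ↔ c' b ≠ 0 := by rw [← mem_supp, ← mem_supp, h]
  rcases zmod_two_eq_zero_or_one (c b) with h₁ | h₁ <;>
    rcases zmod_two_eq_zero_or_one (c' b) with h₂ | h₂ <;> simp_all

@[simp] lemma supp_eq_empty {c : Fin n → ZMod 2} : supp c = ∅ ↔ c = 0 := by
  rw [← supp_injective.eq_iff]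
  simp [supp]

lemma supp_add (a b : Fin n → ZMod 2) : supp (a + b) = supp a ∆ supp b := by
  ext x
  simp only [mem_supp, Finset.mem_symmDiff, Pi.add_apply]
  rcases zmod_two_eq_zero_or_one (a x) with h₁ | h₁ <;>
    rcases zmod_two_eq_zero_or_one (b x) with h₂ | h₂ <;> simp [h₁, h₂, CharTwo.add_self_eq_zero]

lemma supp_add_of_disjoint {a b : Fin n → ZMod 2} (h : Disjoint (supp a) (supp b)) :
    supp (a + b) = supp a ∪ supp b := by
  rw [supp_add, h.symmDiff_eq_sup, sup_eq_union]

lemma supp_add_of_subset {c s : Fin n → ZMod 2} (h : supp s ⊆ supp c) :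
    supp (c + s) = supp c \ supp s := by
  rw [supp_add, symmDiff_of_ge h]

lemma supp_sum_of_pairwiseDisjoint {F : Finset (Fin n → ZMod 2)}
    (hF : (F : Set (Fin n → ZMod 2)).PairwiseDisjoint supp) :
    supp (∑ γ ∈ F, γ) = F.biUnion supp := by
  classical
  induction F using Finset.induction_on with
  | empty => simp [supp]
  | insert a F ha ih =>
    rw [coe_insert, Set.pairwiseDisjoint_insert_of_notMem (by simpa using ha)] at hF
    have ih := ih hF.1
    have hdisj : Disjoint (supp a) (supp (∑ γ ∈ F, γ)) := by
      rw [ih, disjoint_biUnion_right]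
      exact hF.2
    rw [sum_insert ha, biUnion_insert, supp_add_of_disjoint hdisj, ih]

noncomputable def boltzmannWeight (K : ℝ) (e c : Fin n → ZMod 2) : ℝ :=
  Real.exp (K * ∑ b, (-1 : ℝ) ^ ((e b).val + (c b).val))

lemma boltzmannWeight_pos (K : ℝ) (e c : Fin n → ZMod 2) : 0 < boltzmannWeight K e c :=
  Real.exp_pos _

noncomputable def flipRatio (K : ℝ) (e c : Fin n → ZMod 2) : ℝ :=
  ∏ b ∈ supp c, Real.exp (-(2 * K) * (-1 : ℝ) ^ (e b).val)

lemma flipRatio_nonneg (K : ℝ) (e c : Fin n → ZMod 2) : 0 ≤ flipRatio K e c :=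
  prod_nonneg fun _ _ => (Real.exp_pos _).le

lemma boltzmannWeight_eq_mul_flipRatio (K : ℝ) (e c : Fin n → ZMod 2) :
    boltzmannWeight K e c = boltzmannWeight K e 0 * flipRatio K e c := by
  simp only [boltzmannWeight, flipRatio, supp, prod_filter, mul_sum, Real.exp_sum,
    ← prod_mul_distrib]
  refine prod_congr rfl fun b _ => ?_
  rcases zmod_two_eq_zero_or_one (c b) with h | h
  · simp [h]
  · simp [h, ← Real.exp_add, ZMod.val_one]
    ring

lemma flipRatio_sum_of_pairwiseDisjoint (K : ℝ) (e : Fin n → ZMod 2)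
    {F : Finset (Fin n → ZMod 2)} (hF : (F : Set (Fin n → ZMod 2)).PairwiseDisjoint supp) :
    flipRatio K e (∑ γ ∈ F, γ) = ∏ γ ∈ F, flipRatio K e γ := by
  classical
  rw [flipRatio, supp_sum_of_pairwiseDisjoint hF, prod_biUnion hF]
  rfl

lemma bernoulli_eq_prod (p : ℝ) (e : Fin n → ZMod 2) :
    p ^ hammingNorm e * (1 - p) ^ (n - hammingNorm e) =
      ∏ b, if e b = 0 then 1 - p else p := by
  rw [prod_ite, prod_const, prod_const, mul_comm]
  have h := card_filter_add_card_filter_not (s := univ) (fun b => e b = 0)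
  simp only [card_univ, Fintype.card_fin] at h
  simp only [hammingNorm, ne_eq]
  congr 2
  omega

lemma davg_prod (p : ℝ) (f : Fin n → ZMod 2 → ℝ) :
    davg p (fun e => ∏ b, f b (e b)) = ∏ b, ((1 - p) * f b 0 + p * f b 1) := by
  calc davg p (fun e => ∏ b, f b (e b))
      = ∏ b, ∑ v : ZMod 2, (if v = 0 then 1 - p else p) * f b v := by
        simp only [davg, bernoulli_eq_prod, ← prod_mul_distrib]
        rw [prod_univ_sum, Fintype.piFinset_univ]
    _ = ∏ b, ((1 - p) * f b 0 + p * f b 1) := prod_congr rfl fun b _ => by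
        rw [show (univ : Finset (ZMod 2)) = {0, 1} from rfl]
        simp

noncomputable def flipAverage (K p : ℝ) : ℝ :=
  Real.exp (-(2 * K)) * (1 - p) + Real.exp (2 * K) * p

lemma flipAverage_pos (K : ℝ) {p : ℝ} (hp0 : 0 ≤ p) (hp1 : p ≤ 1) : 0 < flipAverage K p := by
  rcases hp0.eq_or_lt with rfl | hp
  · simpa [flipAverage] using Real.exp_pos _
  · exact add_pos_of_nonneg_of_pos (mul_nonneg (Real.exp_pos _).le (sub_nonneg.2 hp1))
      (mul_pos (Real.exp_pos _) hp)

lemma davg_flipRatio (p K : ℝ) (γ : Fin n → ZMod 2) :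
    davg p (fun e => flipRatio K e γ) = flipAverage K p ^ #(supp γ) := by
  simp only [flipRatio, supp, prod_filter]
  rw [davg_prod p fun b v => if γ b ≠ 0 then Real.exp (-(2 * K) * (-1 : ℝ) ^ v.val) else 1,
    ← prod_const, prod_filter]
  refine prod_congr rfl fun b _ => ?_
  split_ifs
  · simp only [flipAverage, ZMod.val_zero, ZMod.val_one, pow_zero, pow_one, mul_one, mul_neg,
      neg_neg]
    ring
  · ring

variable {ρ : Type*}

def IsMinimalCodeword (H : Matrix ρ (Fin n) (ZMod 2)) (c : Fin n → ZMod 2) : Prop :=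
  c ≠ 0 ∧ H *ᵥ c = 0 ∧ ∀ s, s ≠ 0 → H *ᵥ s = 0 → supp s ⊆ supp c → s = c

lemma supp_subset_of_mem_of_sum_eq {F : Finset (Fin n → ZMod 2)}
    (hF : (F : Set (Fin n → ZMod 2)).PairwiseDisjoint supp) {c γ : Fin n → ZMod 2}
    (hsum : ∑ γ ∈ F, γ = c) (hγ : γ ∈ F) : supp γ ⊆ supp c := by
  classical
  rw [← hsum, supp_sum_of_pairwiseDisjoint hF]
  exact subset_biUnion_of_mem supp hγ

lemma exists_minimalCodeword_decomposition {H : Matrix ρ (Fin n) (ZMod 2)}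
    {c : Fin n → ZMod 2} (hc : H *ᵥ c = 0) :
    ∃ F : Finset (Fin n → ZMod 2), (∀ γ ∈ F, IsMinimalCodeword H γ) ∧
      (F : Set (Fin n → ZMod 2)).PairwiseDisjoint supp ∧ ∑ γ ∈ F, γ = c := by
  classical
  induction hN : #(supp c) using Nat.strong_induction_on generalizing c with
  | _ N ih =>
  by_cases h0 : c = 0
  · exact ⟨∅, by simp, by simp, by simp [h0]⟩
  by_cases hmin : IsMinimalCodeword H c
  · exact ⟨{c}, by simpa, by simp, by simp⟩
  obtain ⟨s, hs0, hsH, hsc, hne⟩ :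
      ∃ s, s ≠ 0 ∧ H *ᵥ s = 0 ∧ supp s ⊆ supp c ∧ s ≠ c := by
    simpa [IsMinimalCodeword, h0, hc] using hmin
  -- split `c` as `s + (c + s)`, two codewords of strictly smaller support
  have hrest : supp (c + s) = supp c \ supp s := supp_add_of_subset hsc
  have hs_pos : 0 < #(supp s) := card_pos.2 (nonempty_iff_ne_empty.2 (by simpa using hs0))
  obtain ⟨F₁, hF₁min, hF₁disj, hF₁sum⟩ :=
    ih _ (hN ▸ card_lt_card (ssubset_of_subset_of_ne hsc (supp_injective.ne hne))) hsH rfl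
  obtain ⟨F₂, hF₂min, hF₂disj, hF₂sum⟩ :=
    ih _ (by rw [← hN, hrest, card_sdiff_of_subset hsc]; have := card_le_card hsc; omega)
      (by rw [mulVec_add, hc, hsH, add_zero]) rfl
  have hcross : ∀ γ₁ ∈ F₁, ∀ γ₂ ∈ F₂, Disjoint (supp γ₁) (supp γ₂) := fun γ₁ h₁ γ₂ h₂ =>
    Disjoint.mono (supp_subset_of_mem_of_sum_eq hF₁disj hF₁sum h₁)
      (supp_subset_of_mem_of_sum_eq hF₂disj hF₂sum h₂) (hrest ▸ disjoint_sdiff)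
  have hF₁₂ : Disjoint F₁ F₂ := disjoint_left.2 fun γ h₁ h₂ =>
    (hF₁min γ h₁).1 (supp_eq_empty.1 (disjoint_self.1 (hcross γ h₁ γ h₂)))
  refine ⟨F₁ ∪ F₂, fun γ hγ => ?_, ?_, ?_⟩
  · rcases mem_union.1 hγ with h | h
    exacts [hF₁min γ h, hF₂min γ h]
  · rw [coe_union]
    exact hF₁disj.union hF₂disj fun γ₁ h₁ γ₂ h₂ _ => hcross γ₁ h₁ γ₂ h₂
  · rw [sum_union hF₁₂, hF₁sum, hF₂sum]
    ext b
    rw [Pi.add_apply, Pi.add_apply, add_left_comm, CharTwo.add_self_eq_zero, add_zero]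

lemma sum_le_sum_mul_prod_one_add {α β γ : Type*} {s : Finset α} {T : Finset β}
    {U : Finset γ} (f : α → Finset β) (g : α → γ) (hinj : Set.InjOn (fun a => (f a, g a)) s)
    (hf : ∀ a ∈ s, f a ⊆ T) (hg : ∀ a ∈ s, g a ∈ U) {w : α → ℝ} {v : γ → ℝ} {B : β → ℝ}
    (hv : ∀ u ∈ U, 0 ≤ v u) (hB : ∀ t ∈ T, 0 ≤ B t)
    (hw : ∀ a ∈ s, w a = (∏ t ∈ f a, B t) * v (g a)) :
    ∑ a ∈ s, w a ≤ (∑ u ∈ U, v u) * ∏ t ∈ T, (1 + B t) := by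
  classical
  calc ∑ a ∈ s, w a
      = ∑ q ∈ s.image fun a => (f a, g a), (∏ t ∈ q.1, B t) * v q.2 := by
        rw [sum_image hinj]
        exact sum_congr rfl hw
    _ ≤ ∑ q ∈ T.powerset ×ˢ U, (∏ t ∈ q.1, B t) * v q.2 := by
        refine sum_le_sum_of_subset_of_nonneg ?_ fun q hq _ => ?_
        · simpa [subset_iff] using fun a ha => ⟨hf a ha, hg a ha⟩
        · rw [mem_product, mem_powerset] at hq
          exact mul_nonneg (prod_nonneg fun t ht => hB t (hq.1 ht)) (hv _ hq.2)
    _ = (∑ u ∈ U, v u) * ∏ t ∈ T, (1 + B t) := by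
        rw [sum_product, prod_one_add, mul_comm, sum_mul_sum]

variable {ρ' : Type*} [Fintype ρ'] [DecidableEq ρ']

open Classical in
noncomputable def logicalMinimalCodewords (G : Matrix ρ' (Fin n) (ZMod 2))
    (H : Matrix ρ (Fin n) (ZMod 2)) : Finset (Fin n → ZMod 2) :=
  {γ | IsMinimalCodeword H γ ∧ ¬ ∃ α, α ᵥ* G = γ}

lemma sum_ker_boltzmannWeight_le [Fintype ρ] (G : Matrix ρ' (Fin n) (ZMod 2))
    (H : Matrix ρ (Fin n) (ZMod 2)) (K : ℝ) (e : Fin n → ZMod 2) :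
    ∑ c with H *ᵥ c = 0, boltzmannWeight K e c ≤
      (∑ c ∈ univ.image (· ᵥ* G), boltzmannWeight K e c) *
        ∏ γ ∈ logicalMinimalCodewords G H, (1 + flipRatio K e γ) := by
  classical
  choose! F hFmin hFdisj hFsum using
    fun c (hc : H *ᵥ c = 0) => exists_minimalCodeword_decomposition hc
  let P : (Fin n → ZMod 2) → Prop := fun γ => ∃ α, α ᵥ* G = γ
  have hsplit : ∀ c, H *ᵥ c = 0 →
      ∑ γ ∈ (F c).filter P, γ + ∑ γ ∈ (F c).filter (¬ P ·), γ = c := fun c hc => by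
    rw [sum_filter_add_sum_filter_not, hFsum c hc]
  refine sum_le_sum_mul_prod_one_add (fun c => (F c).filter (¬ P ·))
    (fun c => ∑ γ ∈ (F c).filter P, γ) ?_ ?_ ?_ (fun c _ => (boltzmannWeight_pos K e c).le)
    (fun γ _ => flipRatio_nonneg K e γ) ?_
  · intro c₁ h₁ c₂ h₂ h
    simp only [Prod.mk.injEq] at h
    rw [← hsplit c₁ (mem_filter.1 h₁).2, ← hsplit c₂ (mem_filter.1 h₂).2, h.1, h.2]
  · intro c hc γ hγ
    rw [mem_filter] at hγ
    simpa [logicalMinimalCodewords] using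
      ⟨hFmin c (mem_filter.1 hc).2 γ hγ.1, fun α hα => hγ.2 ⟨α, hα⟩⟩
  · intro c _
    have : ∑ γ ∈ (F c).filter P, γ ∈ LinearMap.range G.vecMulLinear :=
      Submodule.sum_mem _ fun γ hγ => by simpa [P] using (mem_filter.1 hγ).2
    simpa using this
  · intro c hc
    have hc := (mem_filter.1 hc).2
    have hdisj := hFdisj c hc
    have hB : flipRatio K e c = ∏ γ ∈ F c, flipRatio K e γ := by
      conv_lhs => rw [← hFsum c hc]
      exact flipRatio_sum_of_pairwiseDisjoint K e hdisj
    rw [boltzmannWeight_eq_mul_flipRatio K e c, hB, ← prod_filter_mul_prod_filter_not (F c) P,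
      boltzmannWeight_eq_mul_flipRatio K e (∑ γ ∈ (F c).filter P, γ),
      flipRatio_sum_of_pairwiseDisjoint K e (hdisj.subset (coe_subset.2 (filter_subset _ _)))]
    ring

lemma Zf_pos (M : Matrix ρ' (Fin n) (ZMod 2)) (e : Fin n → ZMod 2) (K : ℝ) : 0 < Zf M e K :=
  sum_pos (fun _ _ => Real.exp_pos _) univ_nonempty

lemma Zf_eq_card_mul_sum (M : Matrix ρ' (Fin n) (ZMod 2)) (e : Fin n → ZMod 2) (K : ℝ) :
    Zf M e K = #{α | α ᵥ* M = 0} * ∑ c ∈ univ.image (· ᵥ* M), boltzmannWeight K e c := by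
  classical
  rw [Zf, mul_sum]
  refine (sum_comp (boltzmannWeight K e) (· ᵥ* M)).trans (sum_congr rfl fun c hc => ?_)
  obtain ⟨α, -, rfl⟩ := mem_image.1 hc
  rw [nsmul_eq_mul]
  congr 2
  exact AddMonoidHom.card_fiber_eq_of_mem_range M.vecMulLinear ⟨α, rfl⟩ ⟨0, by simp⟩

lemma finrank_range_vecMulLinear {K ι : Type*} [Field K] [Fintype ι] [Fintype ρ]
    (M : Matrix ρ ι K) : Module.finrank K (LinearMap.range M.vecMulLinear) = M.rank := by
  rw [← rank_transpose, Matrix.rank, mulVecLin_transpose]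

lemma card_vecMul_eq_zero (M : Matrix ρ' (Fin n) (ZMod 2)) :
    #{α | α ᵥ* M = 0} = 2 ^ (Fintype.card ρ' - M.rank) := by
  classical
  have hker : #{α | α ᵥ* M = 0} = Fintype.card (LinearMap.ker M.vecMulLinear) := by
    rw [← Fintype.card_subtype]
    exact Fintype.card_congr (Equiv.subtypeEquivRight fun α => by
      rw [LinearMap.mem_ker, vecMulLinear_apply])
  have hdim := LinearMap.finrank_range_add_finrank_ker M.vecMulLinear
  rw [finrank_range_vecMulLinear, Module.finrank_fintype_fun_eq_card] at hdim
  rw [hker, Module.card_eq_pow_finrank (K := ZMod 2), ZMod.card]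
  congr 1
  omega

section AdaptedDual

variable {rG rH k : ℕ} {G : Matrix (Fin rG) (Fin n) (ZMod 2)}
  {H : Matrix (Fin rH) (Fin n) (ZMod 2)} {Hs : Matrix (Fin rG ⊕ Fin k) (Fin n) (ZMod 2)}

lemma sumElim_zero_vecMul (h : ∀ i, Hs (Sum.inl i) = G i) (α : Fin rG → ZMod 2) :
    Sum.elim α 0 ᵥ* Hs = α ᵥ* G := by
  ext b
  simp [vecMul, dotProduct, Fintype.sum_sum_type, h]

lemma Zf_le_Zf_of_inl_eq (h : ∀ i, Hs (Sum.inl i) = G i) (e : Fin n → ZMod 2) (K : ℝ) :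
    Zf G e K ≤ Zf Hs e K := by
  let ι : (Fin rG → ZMod 2) ↪ (Fin rG ⊕ Fin k → ZMod 2) :=
    ⟨(Sum.elim · 0), fun α β hαβ => funext fun i => congrFun hαβ (Sum.inl i)⟩
  calc Zf G e K = ∑ β ∈ univ.map ι, boltzmannWeight K e (β ᵥ* Hs) := by
        rw [sum_map]
        exact sum_congr rfl fun α _ => by
          rw [show ι α ᵥ* Hs = α ᵥ* G from sumElim_zero_vecMul h α]
          rfl
    _ ≤ Zf Hs e K := sum_le_sum_of_subset_of_nonneg (subset_univ _)
        fun β _ _ => (boltzmannWeight_pos K e _).le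

lemma deltaF_nonneg (h : ∀ i, Hs (Sum.inl i) = G i) (e : Fin n → ZMod 2) (K : ℝ) :
    0 ≤ deltaF G Hs e K :=
  sub_nonneg.2 (Real.log_le_log (Zf_pos G e K) (Zf_le_Zf_of_inl_eq h e K))

lemma _root_.IsAdaptedDual.image_vecMul (hHs : IsAdaptedDual G H Hs) :
    univ.image (· ᵥ* Hs) = ({c | H *ᵥ c = 0} : Finset (Fin n → ZMod 2)) := by
  ext c
  simpa using congrArg (c ∈ ·) hHs.2

lemma _root_.IsAdaptedDual.card_ker_le (hHs : IsAdaptedDual G H Hs)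
    (hk : k = n - G.rank - H.rank) :
    #{β | β ᵥ* Hs = 0} ≤ #{α | α ᵥ* G = 0} := by
  rw [card_vecMul_eq_zero, card_vecMul_eq_zero]
  refine Nat.pow_le_pow_right two_pos ?_
  have hHs_rank : Hs.rank + H.rank = n := by
    have := LinearMap.finrank_range_add_finrank_ker H.mulVecLin
    rwa [Module.finrank_fin_fun, ← hHs.2, finrank_range_vecMulLinear, add_comm] at this
  have hG_le : G.rank ≤ Hs.rank := by
    rw [← finrank_range_vecMulLinear, ← finrank_range_vecMulLinear]
    refine Submodule.finrank_mono ?_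
    rintro _ ⟨α, rfl⟩
    exact ⟨Sum.elim α 0, sumElim_zero_vecMul hHs.1 α⟩
  simp only [Fintype.card_sum, Fintype.card_fin]
  omega

lemma _root_.IsAdaptedDual.deltaF_le (hHs : IsAdaptedDual G H Hs)
    (hk : k = n - G.rank - H.rank) (e : Fin n → ZMod 2) (K : ℝ) :
    deltaF G Hs e K ≤ ∑ γ ∈ logicalMinimalCodewords G H, flipRatio K e γ := by
  have hpos : ∀ γ, 0 < 1 + flipRatio K e γ := fun γ => by linarith [flipRatio_nonneg K e γ]
  set P := ∏ γ ∈ logicalMinimalCodewords G H, (1 + flipRatio K e γ)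
  have hZ : Zf Hs e K ≤ Zf G e K * P := by
    rw [Zf_eq_card_mul_sum, Zf_eq_card_mul_sum, hHs.image_vecMul, mul_assoc]
    exact mul_le_mul (by exact_mod_cast hHs.card_ker_le hk) (sum_ker_boltzmannWeight_le G H K e)
      (sum_nonneg fun c _ => (boltzmannWeight_pos K e c).le) (Nat.cast_nonneg _)
  calc deltaF G Hs e K ≤ Real.log P := by
        rw [deltaF, sub_le_iff_le_add', ← Real.log_mul (Zf_pos G e K).ne'
          (prod_pos fun γ _ => hpos γ).ne']
        exact Real.log_le_log (Zf_pos Hs e K) hZ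
    _ = ∑ γ ∈ logicalMinimalCodewords G H, Real.log (1 + flipRatio K e γ) :=
        Real.log_prod fun γ _ => (hpos γ).ne'
    _ ≤ ∑ γ ∈ logicalMinimalCodewords G H, flipRatio K e γ :=
        sum_le_sum fun γ _ => by linarith [Real.log_le_sub_one_of_pos (hpos γ)]

end AdaptedDual

def indicator (S : Finset (Fin n)) : Fin n → ZMod 2 := fun b => if b ∈ S then 1 else 0

@[simp] lemma supp_indicator (S : Finset (Fin n)) : supp (indicator S) = S := by
  ext b
  by_cases hb : b ∈ S <;> simp [indicator, hb]

lemma card_supp_row_sdiff_le (H : Matrix ρ (Fin n) (ZMod 2)) {S : Finset (Fin n)} {i : ρ}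
    (hi : (H *ᵥ indicator S) i ≠ 0) : #(supp (H i) \ S) + 1 ≤ hammingNorm (H i) := by
  obtain ⟨b, -, hb⟩ := exists_ne_zero_of_sum_ne_zero (show ∑ b, H i b * indicator S b ≠ 0 from hi)
  have hbS : b ∈ S := by by_contra h; simp [indicator, h] at hb
  have hbH : b ∈ supp (H i) := mem_supp.2 (left_ne_zero_of_mul hb)
  rw [hammingNorm_eq_card_supp, ← card_sdiff_add_card_inter (supp (H i)) S]
  exact Nat.add_le_add_left (card_pos.2 ⟨b, mem_inter.2 ⟨hbH, hbS⟩⟩) _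

lemma exists_mem_supp_row_sdiff (H : Matrix ρ (Fin n) (ZMod 2)) {S : Finset (Fin n)} {i : ρ}
    (hi : (H *ᵥ indicator S) i ≠ 0) {c : Fin n → ZMod 2} (hc : H *ᵥ c = 0)
    (hSc : S ⊆ supp c) : ∃ b ∈ supp (H i) \ S, b ∈ supp c := by
  have hsum : (H *ᵥ (c + indicator S)) i ≠ 0 := by simpa [mulVec_add, hc] using hi
  obtain ⟨b, -, hb⟩ :=
    exists_ne_zero_of_sum_ne_zero (show ∑ b, H i b * (c + indicator S) b ≠ 0 from hsum)
  have hb' : b ∈ supp (c + indicator S) := mem_supp.2 (right_ne_zero_of_mul hb)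
  rw [supp_add_of_subset (by simpa using hSc), supp_indicator] at hb'
  obtain ⟨hbc, hbS⟩ := mem_sdiff.1 hb'
  exact ⟨b, mem_sdiff.2 ⟨mem_supp.2 (left_ne_zero_of_mul hb), hbS⟩, hbc⟩

open Classical in
noncomputable def minimalCodewordsContaining (H : Matrix ρ (Fin n) (ZMod 2))
    (S : Finset (Fin n)) (ℓ : ℕ) : Finset (Fin n → ZMod 2) :=
  {c | IsMinimalCodeword H c ∧ S ⊆ supp c ∧ #(supp c) = ℓ}

lemma card_minimalCodewordsContaining_le (H : Matrix ρ (Fin n) (ZMod 2)) {m : ℕ}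
    (hrow : ∀ i, hammingNorm (H i) ≤ m) (r : ℕ) {S : Finset (Fin n)} (hS : S.Nonempty) :
    #(minimalCodewordsContaining H S (#S + r)) ≤ (m - 1) ^ r := by
  classical
  induction r generalizing S with
  | zero =>
    refine card_le_one.2 fun c hc c' hc' => supp_injective ?_
    simp only [minimalCodewordsContaining, mem_filter, mem_univ, true_and, add_zero] at hc hc'
    rw [← eq_of_subset_of_card_le hc.2.1 hc.2.2.le, ← eq_of_subset_of_card_le hc'.2.1 hc'.2.2.le]
  | succ r ih =>
    obtain hempty | ⟨c₀, hc₀⟩ :=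
      eq_empty_or_nonempty (minimalCodewordsContaining H S (#S + (r + 1)))
    · simp [hempty]
    simp only [minimalCodewordsContaining, mem_filter, mem_univ, true_and] at hc₀
    obtain ⟨hmin₀, hSc₀, hcard₀⟩ := hc₀
    -- `S` is not the support of a codeword, since `c₀ ⊋ S` is minimal
    obtain ⟨i, hi⟩ : ∃ i, (H *ᵥ indicator S) i ≠ 0 := by
      by_contra! h
      have := hmin₀.2.2 (indicator S) (by simpa [← supp_eq_empty] using hS.ne_empty)
        (funext h) (by simpa using hSc₀)
      rw [← this, supp_indicator] at hcard₀
      omega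
    calc #(minimalCodewordsContaining H S (#S + (r + 1)))
        ≤ #((supp (H i) \ S).biUnion fun b => minimalCodewordsContaining H (insert b S)
            (#(insert b S) + r)) := by
          refine card_le_card fun c hc => ?_
          simp only [minimalCodewordsContaining, mem_filter, mem_univ, true_and] at hc
          obtain ⟨b, hb, hbc⟩ := exists_mem_supp_row_sdiff H hi hc.1.2.1 hc.2.1
          refine mem_biUnion.2 ⟨b, hb, ?_⟩
          simp only [minimalCodewordsContaining, mem_filter, mem_univ, true_and,
            card_insert_of_notMem (mem_sdiff.1 hb).2, insert_subset_iff]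
          exact ⟨hc.1, ⟨hbc, hc.2.1⟩, by omega⟩
      _ ≤ ∑ _b ∈ supp (H i) \ S, (m - 1) ^ r :=
          card_biUnion_le.trans (sum_le_sum fun b _ => ih (insert_nonempty b S))
      _ ≤ (m - 1) ^ (r + 1) := by
          rw [sum_const, smul_eq_mul, pow_succ']
          have := card_supp_row_sdiff_le H hi
          have := hrow i
          exact Nat.mul_le_mul_right _ (by omega)

lemma card_minimalCodewords_weight_le (H : Matrix ρ (Fin n) (ZMod 2)) {m : ℕ}
    (hrow : ∀ i, hammingNorm (H i) ≤ m) (ℓ : ℕ) :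
    #(minimalCodewordsContaining H ∅ ℓ) ≤ n * (m - 1) ^ (ℓ - 1) := by
  classical
  rcases Nat.eq_zero_or_pos ℓ with rfl | hℓ
  · refine (card_eq_zero.2 (filter_false_of_mem fun c _ hc => hc.1.1 ?_)).trans_le (Nat.zero_le _)
    simpa using hc.2.2
  calc #(minimalCodewordsContaining H ∅ ℓ)
      ≤ #(univ.biUnion fun b => minimalCodewordsContaining H {b} (#{b} + (ℓ - 1))) := by
        refine card_le_card fun c hc => ?_
        simp only [minimalCodewordsContaining, mem_filter, mem_univ, true_and] at hc
        obtain ⟨b, hb⟩ := card_pos.1 (hc.2.2 ▸ hℓ)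
        simp only [minimalCodewordsContaining, mem_biUnion, mem_filter, mem_univ, true_and,
          singleton_subset_iff, card_singleton]
        exact ⟨b, hc.1, hb, by omega⟩
    _ ≤ ∑ _b : Fin n, (m - 1) ^ (ℓ - 1) :=
        card_biUnion_le.trans (sum_le_sum fun b _ =>
          card_minimalCodewordsContaining_le H hrow _ (singleton_nonempty b))
    _ = n * (m - 1) ^ (ℓ - 1) := by simp

lemma dCSS_le_card_supp_of_mem_logicalMinimalCodewords {rG rH : ℕ}
    {G : Matrix (Fin rG) (Fin n) (ZMod 2)} {H : Matrix (Fin rH) (Fin n) (ZMod 2)}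
    {γ : Fin n → ZMod 2} (hγ : γ ∈ logicalMinimalCodewords G H) : dCSS G H ≤ #(supp γ) := by
  simp only [logicalMinimalCodewords, mem_filter, mem_univ, true_and] at hγ
  exact Nat.sInf_le ⟨γ, hγ.1.2.1, hγ.2, rfl⟩

lemma sum_logicalMinimalCodewords_pow_le {rG rH : ℕ} (G : Matrix (Fin rG) (Fin n) (ZMod 2))
    (H : Matrix (Fin rH) (Fin n) (ZMod 2)) {m : ℕ} (hm : 2 ≤ m)
    (hrow : ∀ i, hammingNorm (H i) ≤ m) {x : ℝ} (hx : 0 ≤ x) (hy : ((m : ℝ) - 1) * x < 1) :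
    ∑ γ ∈ logicalMinimalCodewords G H, x ^ #(supp γ) ≤
      n * (((m : ℝ) - 1) * x) ^ dCSS G H / (1 - ((m : ℝ) - 1) * x) := by
  classical
  set y := ((m : ℝ) - 1) * x
  have hm1 : ((m - 1 : ℕ) : ℝ) = (m : ℝ) - 1 := by rw [Nat.cast_sub (by omega), Nat.cast_one]
  have hy0 : 0 ≤ y := mul_nonneg (by rw [← hm1]; positivity) hx
  have hmaps : ∀ γ ∈ logicalMinimalCodewords G H, #(supp γ) ∈ Ico (dCSS G H) (n + 1) :=
    fun γ hγ => mem_Ico.2 ⟨dCSS_le_card_supp_of_mem_logicalMinimalCodewords hγ,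
      Nat.lt_succ_of_le ((card_le_univ _).trans_eq (Fintype.card_fin n))⟩
  calc ∑ γ ∈ logicalMinimalCodewords G H, x ^ #(supp γ)
      = ∑ ℓ ∈ Ico (dCSS G H) (n + 1),
          #{γ ∈ logicalMinimalCodewords G H | #(supp γ) = ℓ} * x ^ ℓ := by
        rw [← sum_fiberwise_of_maps_to hmaps]
        refine sum_congr rfl fun ℓ _ => ?_
        rw [sum_congr rfl fun γ hγ => by rw [(mem_filter.1 hγ).2], sum_const, nsmul_eq_mul]
    _ ≤ ∑ ℓ ∈ Ico (dCSS G H) (n + 1), n * y ^ ℓ := by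
        refine sum_le_sum fun ℓ _ => ?_
        have hcard : #{γ ∈ logicalMinimalCodewords G H | #(supp γ) = ℓ} ≤
            n * (m - 1) ^ (ℓ - 1) := by
          refine le_trans (card_le_card fun γ hγ => ?_) (card_minimalCodewords_weight_le H hrow ℓ)
          simp only [logicalMinimalCodewords, minimalCodewordsContaining, mem_filter,
            mem_univ, true_and] at hγ ⊢
          exact ⟨hγ.1.1, empty_subset _, hγ.2⟩
        calc (#{γ ∈ logicalMinimalCodewords G H | #(supp γ) = ℓ} : ℝ) * x ^ ℓ
            ≤ n * ((m : ℝ) - 1) ^ (ℓ - 1) * x ^ ℓ := by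
              rw [← hm1]
              exact mul_le_mul_of_nonneg_right (by exact_mod_cast hcard) (pow_nonneg hx ℓ)
          _ ≤ n * y ^ ℓ := by
              rw [mul_assoc, mul_pow]
              refine mul_le_mul_of_nonneg_left (mul_le_mul_of_nonneg_right ?_ (pow_nonneg hx ℓ))
                n.cast_nonneg
              exact pow_le_pow_right₀ (by rw [← hm1]; exact_mod_cast (by omega : 1 ≤ m - 1))
                (Nat.sub_le ℓ 1)
    _ ≤ n * y ^ dCSS G H / (1 - y) := by
        rw [← mul_sum, mul_div_assoc]
        exact mul_le_mul_of_nonneg_left (geom_sum_Ico_le_of_lt_one hy0 hy) n.cast_nonneg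

section DisorderAverage

variable {p : ℝ}

lemma davg_mono (hp0 : 0 ≤ p) (hp1 : p ≤ 1) {X Y : (Fin n → ZMod 2) → ℝ}
    (h : ∀ e, X e ≤ Y e) : davg p X ≤ davg p Y :=
  sum_le_sum fun e _ => mul_le_mul_of_nonneg_left (h e)
    (mul_nonneg (pow_nonneg hp0 _) (pow_nonneg (sub_nonneg.2 hp1) _))

lemma davg_nonneg (hp0 : 0 ≤ p) (hp1 : p ≤ 1) {X : (Fin n → ZMod 2) → ℝ}
    (h : ∀ e, 0 ≤ X e) : 0 ≤ davg p X := by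
  simpa [davg] using davg_mono hp0 hp1 h

lemma davg_sum {ι : Type*} (T : Finset ι) (X : ι → (Fin n → ZMod 2) → ℝ) :
    davg p (fun e => ∑ i ∈ T, X i e) = ∑ i ∈ T, davg p (X i) := by
  simp only [davg, mul_sum]
  exact sum_comm

end DisorderAverage

lemma davg_deltaF_le {rG rH k : ℕ} {G : Matrix (Fin rG) (Fin n) (ZMod 2)}
    {H : Matrix (Fin rH) (Fin n) (ZMod 2)} {Hs : Matrix (Fin rG ⊕ Fin k) (Fin n) (ZMod 2)}
    (hHs : IsAdaptedDual G H Hs) (hk : k = n - G.rank - H.rank) {m : ℕ} (hm : 2 ≤ m)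
    (hrow : ∀ i, hammingNorm (H i) ≤ m) {K p : ℝ} (hp0 : 0 ≤ p) (hp1 : p ≤ 1)
    (hy : ((m : ℝ) - 1) * flipAverage K p < 1) :
    davg p (fun e => deltaF G Hs e K) ≤
      n * (((m : ℝ) - 1) * flipAverage K p) ^ dCSS G H / (1 - ((m : ℝ) - 1) * flipAverage K p) := by
  calc davg p (fun e => deltaF G Hs e K)
      ≤ davg p (fun e => ∑ γ ∈ logicalMinimalCodewords G H, flipRatio K e γ) :=
        davg_mono hp0 hp1 fun e => hHs.deltaF_le hk e K
    _ = ∑ γ ∈ logicalMinimalCodewords G H, flipAverage K p ^ #(supp γ) := by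
        rw [davg_sum]
        exact sum_congr rfl fun γ _ => davg_flipRatio p K γ
    _ ≤ _ := sum_logicalMinimalCodewords_pow_le G H hm hrow (flipAverage_pos K hp0 hp1).le hy

lemma tendsto_natCast_mul_pow_of_log_le {N d : ℕ → ℕ} (hN : Tendsto N atTop atTop) {D y : ℝ}
    (hD : 0 < D) (hy0 : 0 < y) (hy : y < Real.exp (-1 / D))
    (hd : ∀ t, D * Real.log (N t) ≤ d t) :
    Tendsto (fun t => (N t : ℝ) * y ^ d t) atTop (nhds 0) := by
  have hlog : Real.log y < -1 / D := (Real.log_lt_iff_lt_exp hy0).2 hy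
  have hlog0 : Real.log y < 0 := hlog.trans (div_neg_of_neg_of_pos (by norm_num) hD)
  -- `n y^d ≤ n · n^(D log y) = n^(1 + D log y)`, a negative power of `n`
  have hc : 1 + D * Real.log y < 0 := by
    have := mul_lt_mul_of_pos_left hlog hD
    rw [mul_div_cancel₀ _ hD.ne'] at this
    linarith
  have hbound : ∀ t, (N t : ℝ) * y ^ d t ≤ Real.exp ((1 + D * Real.log y) * Real.log (N t)) := by
    intro t
    rcases Nat.eq_zero_or_pos (N t) with h0 | hpos
    · simp [h0]
    have hN0 : (0 : ℝ) < N t := by exact_mod_cast hpos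
    calc (N t : ℝ) * y ^ d t = Real.exp (Real.log (N t) + d t * Real.log y) := by
          rw [Real.exp_add, Real.exp_log hN0, ← Real.log_pow, Real.exp_log (pow_pos hy0 _)]
      _ ≤ Real.exp ((1 + D * Real.log y) * Real.log (N t)) := by
          gcongr
          linarith [mul_le_mul_of_nonpos_right (hd t) hlog0.le]
  have hlim : Tendsto (fun t => Real.exp ((1 + D * Real.log y) * Real.log (N t))) atTop (nhds 0) :=
    Real.tendsto_exp_atBot.comp <| (Real.tendsto_log_atTop.comp
      (tendsto_natCast_atTop_atTop.comp hN)).const_mul_atTop_of_neg hc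
  exact squeeze_zero (fun t => mul_nonneg (N t).cast_nonneg (pow_nonneg hy0.le _)) hbound hlim

end CSS

open CSS

theorem stmt12_general (rG rH kk nn : ℕ → ℕ)
    (G : ∀ t, Matrix (Fin (rG t)) (Fin (nn t)) (ZMod 2))
    (H : ∀ t, Matrix (Fin (rH t)) (Fin (nn t)) (ZMod 2))
    (hk : ∀ t, kk t = nn t - (G t).rank - (H t).rank)
    (Hs : ∀ t, Matrix (Fin (rG t) ⊕ Fin (kk t)) (Fin (nn t)) (ZMod 2))
    (hHs : ∀ t, IsAdaptedDual (G t) (H t) (Hs t))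
    (hmono : StrictMono nn)
    (m : ℕ) (hm : 2 ≤ m)
    (hrowH : ∀ t i, hammingNorm (H t i) ≤ m)
    (D : ℝ) (hD : 0 < D)
    (hdist : ∀ t, D * Real.log (nn t) ≤
      (min (dCSS (G t) (H t)) (dCSS (H t) (G t)) : ℝ))
    (K p : ℝ) (hp0 : 0 ≤ p) (hp1 : p ≤ 1)
    (hregion : ((m : ℝ) - 1) * (Real.exp (-(2 * K)) * (1 - p) + Real.exp (2 * K) * p) <
      Real.exp (-1 / D)) :
    Tendsto (fun t => davg p (fun e => deltaF (G t) (Hs t) e K)) atTop (nhds 0) := by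
  set y := ((m : ℝ) - 1) * flipAverage K p
  have hm' : (2 : ℝ) ≤ m := by exact_mod_cast hm
  have hy0 : 0 < y := mul_pos (by linarith) (flipAverage_pos K hp0 hp1)
  have hy1 : y < 1 := hregion.trans (Real.exp_lt_one_iff.2 (div_neg_of_neg_of_pos (by norm_num) hD))
  have hdistG : ∀ t, D * Real.log (nn t) ≤ dCSS (G t) (H t) := fun t =>
    (hdist t).trans (by exact_mod_cast min_le_left _ _)
  have hlim := (tendsto_natCast_mul_pow_of_log_le hmono.tendsto_atTop hD hy0 hregion
    hdistG).div_const (1 - y)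
  rw [zero_div] at hlim
  exact squeeze_zero (fun t => davg_nonneg hp0 hp1 fun e => deltaF_nonneg (hHs t).1 e K)
    (fun t => davg_deltaF_le (hHs t) (hk t) hm (hrowH t) hp0 hp1 hy1) hlim

/-- Theorem 1: for LDPC CSS code sequences with logarithmically growing distance, the
disorder-averaged homological differences converge to zero in the region
`(m−1)[e^{−2K}(1−p) + e^{2K}p] < e^{−1/D}`. -/
theorem stmt12 (rG rH kk nn : ℕ → ℕ)
    (G : ∀ t, Matrix (Fin (rG t)) (Fin (nn t)) (ZMod 2))
    (H : ∀ t, Matrix (Fin (rH t)) (Fin (nn t)) (ZMod 2))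
    (hGH : ∀ t, G t * (H t)ᵀ = 0)
    (hk : ∀ t, kk t = nn t - (G t).rank - (H t).rank)
    (Hs : ∀ t, Matrix (Fin (rG t) ⊕ Fin (kk t)) (Fin (nn t)) (ZMod 2))
    (hHs : ∀ t, IsAdaptedDual (G t) (H t) (Hs t))
    (hmono : StrictMono nn)
    (m : ℕ) (hm : 2 ≤ m)
    (hrowG : ∀ t i, hammingNorm (G t i) ≤ m)
    (hrowH : ∀ t i, hammingNorm (H t i) ≤ m)
    (D : ℝ) (hD : 0 < D)
    (hdist : ∀ t, D * Real.log (nn t) ≤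
      (min (dCSS (G t) (H t)) (dCSS (H t) (G t)) : ℝ))
    (K p : ℝ) (hK : 0 ≤ K) (hp0 : 0 ≤ p) (hp1 : p ≤ 1)
    (hregion : ((m : ℝ) - 1) * (Real.exp (-(2 * K)) * (1 - p) + Real.exp (2 * K) * p) <
      Real.exp (-1 / D)) :
    Tendsto (fun t => davg p (fun e => deltaF (G t) (Hs t) e K)) atTop (nhds 0) :=
  stmt12_general rG rH kk nn G H hk Hs hHs hmono m hm hrowH D hD hdist K p hp0 hp1 hregion
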